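/- Suppose f is twice continuously differentiable. Let X ∈ S_{n,p} and let D ∈ T_X (i.e. Φ(DᵀX) = 0). Then, for any value of the penalty parameter β, the Hessian of h at X satisfies ⟨D, Hh(X)[D]⟩ = ⟨D, Hf(X)[D] − D·Φ(Xᵀ∇f(X))⟩. -/

import Mathlib

/-!
Differentiating `Y ↦ Y A(Y)` gives `C ↦ C A(Y) − Y Φ(YᵀC)`, hence
`∇h(Y) = ∇f(Y A(Y)) A(Y) − Y Φ(Yᵀ∇f(Y A(Y))) + β Y (YᵀY − I)`.
At `X ∈ S_{n,p}` we have `A(X) = I`, and along a tangent direction `D` the symmetric matrix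
`Φ(XᵀD)`, which is (up to sign and a factor 2) the derivative of both `A` and `YᵀY`, vanishes.
So `Hh(X)[D] = Hf(X)[D] − D Φ(Xᵀ∇f(X)) − X Φ(Dᵀ∇f(X) + Xᵀ Hf(X)[D])`, whatever `β` is, and the
last term lies in the normal space `N_X`, which is orthogonal to `D`.
-/

open Matrix

attribute [local instance] Matrix.frobeniusNormedAddCommGroup Matrix.frobeniusNormedSpace

namespace ExPen

noncomputable def finner {n p : ℕ} (A B : Matrix (Fin n) (Fin p) ℝ) : ℝ := (Aᵀ * B).trace

noncomputable def Phi {p : ℕ} (M : Matrix (Fin p) (Fin p) ℝ) : Matrix (Fin p) (Fin p) ℝ :=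
  (1 / 2 : ℝ) • (M + Mᵀ)

noncomputable def Amap {n p : ℕ} (X : Matrix (Fin n) (Fin p) ℝ) : Matrix (Fin p) (Fin p) ℝ :=
  (3 / 2 : ℝ) • (1 : Matrix (Fin p) (Fin p) ℝ) - (1 / 2 : ℝ) • (Xᵀ * X)

noncomputable def g {n p : ℕ} (f : Matrix (Fin n) (Fin p) ℝ → ℝ)
    (X : Matrix (Fin n) (Fin p) ℝ) : ℝ := f (X * Amap X)

noncomputable def hpen {n p : ℕ} (f : Matrix (Fin n) (Fin p) ℝ → ℝ) (β : ℝ)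
    (X : Matrix (Fin n) (Fin p) ℝ) : ℝ := g f X + β / 4 * ‖Xᵀ * X - 1‖ ^ 2

noncomputable def dualCLM {n p : ℕ} (G : Matrix (Fin n) (Fin p) ℝ) :
    Matrix (Fin n) (Fin p) ℝ →L[ℝ] ℝ :=
  LinearMap.toContinuousLinearMap
    { toFun := fun D => (Gᵀ * D).trace
      map_add' := by intro D E; simp [Matrix.mul_add]
      map_smul' := by intro c D; simp [Matrix.mul_smul] }

def HasGradAt {n p : ℕ} (φ : Matrix (Fin n) (Fin p) ℝ → ℝ)
    (X G : Matrix (Fin n) (Fin p) ℝ) : Prop :=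
  HasFDerivAt φ (dualCLM G) X

noncomputable def specNorm {n p : ℕ} (X : Matrix (Fin n) (Fin p) ℝ) : ℝ :=
  ‖LinearMap.toContinuousLinearMap
    (Matrix.toEuclideanLin X : EuclideanSpace ℝ (Fin p) →ₗ[ℝ] EuclideanSpace ℝ (Fin n))‖

lemma posSemidef_tmul {n p : ℕ} (X : Matrix (Fin n) (Fin p) ℝ) : (Xᵀ * X).PosSemidef := by
  simpa [Matrix.conjTranspose_eq_transpose_of_trivial] using
    Matrix.posSemidef_conjTranspose_mul_self X

noncomputable def psdSqrt {m : Type*} [Fintype m] [DecidableEq m] {A : Matrix m m ℝ}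
    (hA : A.PosSemidef) : Matrix m m ℝ :=
  hA.1.eigenvectorUnitary.1 * diagonal ((↑) ∘ (√·) ∘ hA.1.eigenvalues) *
  (star hA.1.eigenvectorUnitary : Matrix m m ℝ)

noncomputable def Pst {n p : ℕ} (X : Matrix (Fin n) (Fin p) ℝ) : Matrix (Fin n) (Fin p) ℝ :=
  X * (psdSqrt (posSemidef_tmul X))⁻¹

end ExPen

namespace Matrix

variable {l m n : Type*}

noncomputable def mulCLM [Fintype l] [Fintype m] [Fintype n] :
    Matrix l m ℝ →L[ℝ] Matrix m n ℝ →L[ℝ] Matrix l n ℝ :=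
  (mulLinearMap ℝ).mkContinuous₂ 1 fun A B => by simpa using frobenius_norm_mul A B

noncomputable def mulLeftCLM [Fintype m] [Fintype n] (A : Matrix l m ℝ) :
    Matrix m n ℝ →L[ℝ] Matrix l n ℝ :=
  LinearMap.toContinuousLinearMap (mulLeftLinearMap n ℝ A)

noncomputable def mulRightCLM [Fintype l] [Fintype m] (B : Matrix m n ℝ) :
    Matrix l m ℝ →L[ℝ] Matrix l n ℝ :=
  LinearMap.toContinuousLinearMap (mulRightLinearMap l ℝ B)

noncomputable def transposeCLM [Fintype m] [Fintype n] : Matrix m n ℝ →L[ℝ] Matrix n m ℝ :=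
  LinearMap.toContinuousLinearMap (transposeLinearEquiv m n ℝ ℝ).toLinearMap

noncomputable def traceCLM [Fintype n] : Matrix n n ℝ →L[ℝ] ℝ :=
  LinearMap.toContinuousLinearMap (traceLinearMap n ℝ ℝ)

end Matrix

section MatrixCalculus

variable {E : Type*} [NormedAddCommGroup E] [NormedSpace ℝ E] {x : E}
  {l m n : Type*} [Fintype l] [Fintype m] [Fintype n]

theorem HasFDerivAt.matrix_mul {φ : E → Matrix l m ℝ} {ψ : E → Matrix m n ℝ}
    {φ' : E →L[ℝ] Matrix l m ℝ} {ψ' : E →L[ℝ] Matrix m n ℝ}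
    (hφ : HasFDerivAt φ φ' x) (hψ : HasFDerivAt ψ ψ' x) :
    HasFDerivAt (fun y => φ y * ψ y)
      ((mulLeftCLM (φ x)).comp ψ' + (mulRightCLM (ψ x)).comp φ') x := by
  exact mulCLM.hasFDerivAt_of_bilinear hφ hψ

theorem HasFDerivAt.matrix_transpose {φ : E → Matrix m n ℝ} {φ' : E →L[ℝ] Matrix m n ℝ}
    (hφ : HasFDerivAt φ φ' x) : HasFDerivAt (fun y => (φ y)ᵀ) (transposeCLM.comp φ') x := by
  exact transposeCLM.hasFDerivAt.comp x hφ

end MatrixCalculus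

namespace ExPen

section

variable {n p q : ℕ}

lemma dualCLM_injective : Function.Injective (dualCLM : Matrix (Fin n) (Fin p) ℝ → _) :=
  fun _ _ h =>
    transpose_injective <| ext_iff_trace_mul_right.mpr fun C => DFunLike.congr_fun h C

theorem HasGradAt.unique {φ : Matrix (Fin n) (Fin p) ℝ → ℝ} {X G G' : Matrix (Fin n) (Fin p) ℝ}
    (h : HasGradAt φ X G) (h' : HasGradAt φ X G') : G = G' :=
  dualCLM_injective (HasFDerivAt.unique h h')

lemma finner_add_left (A B C : Matrix (Fin n) (Fin p) ℝ) :
    finner (A + B) C = finner A C + finner B C := by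
  simp [finner, transpose_add, Matrix.add_mul, trace_add]

theorem HasGradAt.add {φ ψ : Matrix (Fin n) (Fin p) ℝ → ℝ} {X G H : Matrix (Fin n) (Fin p) ℝ}
    (hφ : HasGradAt φ X G) (hψ : HasGradAt ψ X H) :
    HasGradAt (fun Y => φ Y + ψ Y) X (G + H) := by
  refine (HasFDerivAt.add hφ hψ).congr_fderiv ?_
  ext1 C
  -- Derivatives carry the Frobenius topology on matrices, the maps written here the product
  -- topology; these agree only up to unfolding, so `simp` cannot evaluate applied maps and each
  -- directional derivative is stated with `show`.
  show finner G C + finner H C = finner (G + H) C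
  rw [finner_add_left]

lemma finner_sub_left (A B C : Matrix (Fin n) (Fin p) ℝ) :
    finner (A - B) C = finner A C - finner B C := by
  simp [finner, transpose_sub, Matrix.sub_mul, trace_sub]

lemma finner_sub_right (A B C : Matrix (Fin n) (Fin p) ℝ) :
    finner A (B - C) = finner A B - finner A C := by
  simp [finner, Matrix.mul_sub, trace_sub]

lemma finner_smul_left (c : ℝ) (A B : Matrix (Fin n) (Fin p) ℝ) :
    finner (c • A) B = c * finner A B := by
  simp [finner, transpose_smul, smul_mul, trace_smul]

lemma finner_smul_right (c : ℝ) (A B : Matrix (Fin n) (Fin p) ℝ) :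
    finner A (c • B) = c * finner A B := by
  simp [finner, Matrix.mul_smul, trace_smul]

lemma finner_comm (A B : Matrix (Fin n) (Fin p) ℝ) : finner A B = finner B A := by
  rw [finner, finner, ← trace_transpose, transpose_mul, transpose_transpose]

lemma finner_mul_right (C : Matrix (Fin n) (Fin p) ℝ) (A : Matrix (Fin n) (Fin q) ℝ)
    (B : Matrix (Fin q) (Fin p) ℝ) : finner C (A * B) = finner (Aᵀ * C) B := by
  simp only [finner, transpose_mul, transpose_transpose, Matrix.mul_assoc]

lemma finner_mul_left (A : Matrix (Fin n) (Fin q) ℝ) (B : Matrix (Fin q) (Fin p) ℝ)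
    (C : Matrix (Fin n) (Fin p) ℝ) : finner (A * B) C = finner B (Aᵀ * C) := by
  rw [finner_comm, finner_mul_right, finner_comm]

lemma finner_mul_right_transpose (G C : Matrix (Fin n) (Fin p) ℝ)
    (S : Matrix (Fin p) (Fin p) ℝ) : finner G (C * S) = finner (G * Sᵀ) C := by
  rw [finner, finner, ← Matrix.mul_assoc, trace_mul_comm, transpose_mul, transpose_transpose,
    Matrix.mul_assoc]

lemma norm_sq_eq_finner (M : Matrix (Fin n) (Fin p) ℝ) : ‖M‖ ^ 2 = finner M M := by
  rw [frobenius_norm_def, ← Real.rpow_natCast, ← Real.rpow_mul (by positivity), finner,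
    trace, Finset.sum_comm]
  norm_num [mul_apply, sq]

lemma Phi_transpose (M : Matrix (Fin p) (Fin p) ℝ) : Phi Mᵀ = Phi M := by
  simp [Phi, add_comm]

lemma Phi_of_symm {M : Matrix (Fin p) (Fin p) ℝ} (hM : Mᵀ = M) : Phi M = M := by
  rw [Phi, hM, ← two_smul ℝ M, smul_smul]; norm_num

lemma finner_Phi (M N : Matrix (Fin p) (Fin p) ℝ) : finner M (Phi N) = finner (Phi M) N := by
  simp only [finner, Phi, transpose_smul, transpose_add, transpose_transpose, Matrix.mul_smul,
    Matrix.smul_mul, Matrix.mul_add, Matrix.add_mul, trace_smul, trace_add, trace_transpose_mul]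

lemma finner_mul_Phi_of_Phi_eq_zero {X D : Matrix (Fin n) (Fin p) ℝ} (hD : Phi (Dᵀ * X) = 0)
    (M : Matrix (Fin p) (Fin p) ℝ) : finner D (X * Phi M) = 0 := by
  rw [finner_mul_right, finner_Phi, ← Phi_transpose, transpose_mul, transpose_transpose, hD]
  simp [finner]

noncomputable def PhiCLM : Matrix (Fin p) (Fin p) ℝ →L[ℝ] Matrix (Fin p) (Fin p) ℝ :=
  (1 / 2 : ℝ) • (ContinuousLinearMap.id ℝ _ + transposeCLM)

lemma transpose_Amap (Y : Matrix (Fin n) (Fin p) ℝ) : (Amap Y)ᵀ = Amap Y := by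
  simp [Amap, transpose_sub, transpose_smul]

lemma Amap_of_transpose_mul_self {X : Matrix (Fin n) (Fin p) ℝ} (hX : Xᵀ * X = 1) :
    Amap X = 1 := by
  rw [Amap, hX, ← sub_smul]; norm_num

theorem hasFDerivAt_gram (Y : Matrix (Fin n) (Fin p) ℝ) :
    HasFDerivAt (fun Z : Matrix (Fin n) (Fin p) ℝ => Zᵀ * Z)
      ((2 : ℝ) • PhiCLM.comp (mulLeftCLM Yᵀ)) Y := by
  refine ((hasFDerivAt_id Y).matrix_transpose.matrix_mul (hasFDerivAt_id Y)).congr_fderiv ?_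
  ext1 C
  show Yᵀ * C + Cᵀ * Y = (2 : ℝ) • Phi (Yᵀ * C)
  rw [Phi, smul_smul, transpose_mul, transpose_transpose]; norm_num

theorem hasFDerivAt_Amap (Y : Matrix (Fin n) (Fin p) ℝ) :
    HasFDerivAt Amap (-PhiCLM.comp (mulLeftCLM Yᵀ)) Y := by
  refine (((hasFDerivAt_gram Y).const_smul (1 / 2 : ℝ)).const_sub _).congr_fderiv ?_
  ext1 C
  show -((1 / 2 : ℝ) • (2 : ℝ) • Phi (Yᵀ * C)) = -Phi (Yᵀ * C)
  rw [smul_smul]; norm_num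

theorem hasFDerivAt_mul_Amap (Y : Matrix (Fin n) (Fin p) ℝ) :
    HasFDerivAt (fun Z => Z * Amap Z)
      (mulRightCLM (Amap Y) - (mulLeftCLM Y).comp (PhiCLM.comp (mulLeftCLM Yᵀ))) Y := by
  refine ((hasFDerivAt_id Y).matrix_mul (hasFDerivAt_Amap Y)).congr_fderiv ?_
  ext1 C
  show Y * -Phi (Yᵀ * C) + C * Amap Y = C * Amap Y - Y * Phi (Yᵀ * C)
  rw [Matrix.mul_neg, neg_add_eq_sub]

theorem _root_.HasFDerivAt.matrix_norm_sq {E : Type*} [NormedAddCommGroup E] [NormedSpace ℝ E]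
    {x : E} {φ : E → Matrix (Fin n) (Fin p) ℝ} {φ' : E →L[ℝ] Matrix (Fin n) (Fin p) ℝ}
    (hφ : HasFDerivAt φ φ' x) :
    HasFDerivAt (fun y => ‖φ y‖ ^ 2) ((2 : ℝ) • (dualCLM (φ x)).comp φ') x := by
  simp_rw [norm_sq_eq_finner]
  refine (traceCLM.hasFDerivAt.comp x (hφ.matrix_transpose.matrix_mul hφ)).congr_fderiv ?_
  ext1 C
  show ((φ x)ᵀ * φ' C + (φ' C)ᵀ * φ x).trace = 2 * finner (φ x) (φ' C)
  rw [trace_add, ← finner, ← finner, finner_comm (φ' C)]; ring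

theorem hasGradAt_g {f : Matrix (Fin n) (Fin p) ℝ → ℝ} {Y G : Matrix (Fin n) (Fin p) ℝ}
    (hf : HasGradAt f (Y * Amap Y) G) :
    HasGradAt (g f) Y (G * Amap Y - Y * Phi (Yᵀ * G)) := by
  unfold HasGradAt at hf ⊢
  refine (hf.comp Y (hasFDerivAt_mul_Amap Y)).congr_fderiv ?_
  ext1 C
  show finner G (C * Amap Y - Y * Phi (Yᵀ * C)) = finner (G * Amap Y - Y * Phi (Yᵀ * G)) C
  rw [finner_sub_right, finner_mul_right_transpose, transpose_Amap, finner_mul_right,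
    finner_Phi, finner_sub_left, finner_mul_left Y]

theorem hasGradAt_penalty (β : ℝ) (Y : Matrix (Fin n) (Fin p) ℝ) :
    HasGradAt (fun Z : Matrix (Fin n) (Fin p) ℝ => β / 4 * ‖Zᵀ * Z - 1‖ ^ 2) Y
      (β • (Y * (Yᵀ * Y - 1))) := by
  refine (((hasFDerivAt_gram Y).sub_const 1).matrix_norm_sq.const_mul (β / 4)).congr_fderiv ?_
  ext1 C
  show β / 4 * (2 * finner (Yᵀ * Y - 1) ((2 : ℝ) • Phi (Yᵀ * C)))
    = finner (β • (Y * (Yᵀ * Y - 1))) C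
  have hsymm : (Yᵀ * Y - 1)ᵀ = Yᵀ * Y - 1 := by simp [transpose_sub, transpose_mul]
  rw [finner_smul_right, finner_Phi, Phi_of_symm hsymm, finner_smul_left, finner_mul_left]
  ring

noncomputable def gradExPen (gradf : Matrix (Fin n) (Fin p) ℝ → Matrix (Fin n) (Fin p) ℝ)
    (β : ℝ) (Y : Matrix (Fin n) (Fin p) ℝ) : Matrix (Fin n) (Fin p) ℝ :=
  gradf (Y * Amap Y) * Amap Y - Y * Phi (Yᵀ * gradf (Y * Amap Y)) + β • (Y * (Yᵀ * Y - 1))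

theorem hasGradAt_hpen {f : Matrix (Fin n) (Fin p) ℝ → ℝ}
    {gradf : Matrix (Fin n) (Fin p) ℝ → Matrix (Fin n) (Fin p) ℝ}
    (hgradf : ∀ Y, HasGradAt f Y (gradf Y)) (β : ℝ) (Y : Matrix (Fin n) (Fin p) ℝ) :
    HasGradAt (hpen f β) Y (gradExPen gradf β Y) :=
  (hasGradAt_g (hgradf _)).add (hasGradAt_penalty β Y)

theorem gradExPen_deriv_apply_of_tangent
    {gradf : Matrix (Fin n) (Fin p) ℝ → Matrix (Fin n) (Fin p) ℝ}
    {Hf : Matrix (Fin n) (Fin p) ℝ → Matrix (Fin n) (Fin p) ℝ →L[ℝ] Matrix (Fin n) (Fin p) ℝ}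
    (hHf : ∀ Y, HasFDerivAt gradf (Hf Y) Y) {β : ℝ} {X D : Matrix (Fin n) (Fin p) ℝ}
    (hX : Xᵀ * X = 1) (hD : Phi (Dᵀ * X) = 0)
    {L : Matrix (Fin n) (Fin p) ℝ →L[ℝ] Matrix (Fin n) (Fin p) ℝ}
    (hL : HasFDerivAt (gradExPen gradf β) L X) :
    L D = Hf X D - D * Phi (Xᵀ * gradf X) - X * Phi (Dᵀ * gradf X + Xᵀ * Hf X D) := by
  have hid := hasFDerivAt_id (𝕜 := ℝ) X
  have hG := (hHf (X * Amap X)).comp X (hasFDerivAt_mul_Amap X)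
  have hL' := ((hG.matrix_mul (hasFDerivAt_Amap X)).sub
    (hid.matrix_mul (PhiCLM.hasFDerivAt.comp X (hid.matrix_transpose.matrix_mul hG)))).add
    ((hid.matrix_mul ((hasFDerivAt_gram X).sub_const 1)).const_smul β)
  have hXD : Phi (Xᵀ * D) = 0 := by
    rw [← Phi_transpose, transpose_mul, transpose_transpose, hD]
  have hA : Amap X = 1 := Amap_of_transpose_mul_self hX
  rw [hL.unique hL']
  show gradf (X * Amap X) * -Phi (Xᵀ * D)
        + Hf (X * Amap X) (D * Amap X - X * Phi (Xᵀ * D)) * Amap X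
      - (X * Phi (Xᵀ * Hf (X * Amap X) (D * Amap X - X * Phi (Xᵀ * D))
            + Dᵀ * gradf (X * Amap X))
        + D * Phi (Xᵀ * gradf (X * Amap X)))
      + β • (X * ((2 : ℝ) • Phi (Xᵀ * D)) + D * (Xᵀ * X - 1)) = _
  simp only [hXD, hA, hX, Matrix.mul_one, Matrix.mul_zero, neg_zero, sub_zero, smul_zero,
    sub_self, add_zero, zero_add]
  rw [add_comm (Xᵀ * _)]
  abel

end

theorem statement_8_general {n p : ℕ} (f : Matrix (Fin n) (Fin p) ℝ → ℝ) (β : ℝ)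
    (gradf gradh : Matrix (Fin n) (Fin p) ℝ → Matrix (Fin n) (Fin p) ℝ)
    (Hf : Matrix (Fin n) (Fin p) ℝ → Matrix (Fin n) (Fin p) ℝ →L[ℝ] Matrix (Fin n) (Fin p) ℝ)
    (hgradf : ∀ Y, HasGradAt f Y (gradf Y))
    (hHf : ∀ Y, HasFDerivAt gradf (Hf Y) Y)
    (hgradh : ∀ Y, HasGradAt (hpen f β) Y (gradh Y))
    (X : Matrix (Fin n) (Fin p) ℝ) (hX : Xᵀ * X = 1)
    (D : Matrix (Fin n) (Fin p) ℝ) (hD : Phi (Dᵀ * X) = 0)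
    (Hh : Matrix (Fin n) (Fin p) ℝ →L[ℝ] Matrix (Fin n) (Fin p) ℝ)
    (hHh : HasFDerivAt gradh Hh X) :
    finner D (Hh D) = finner D (Hf X D - D * Phi (Xᵀ * gradf X)) := by
  obtain rfl : gradh = gradExPen gradf β :=
    funext fun Y => (hgradh Y).unique (hasGradAt_hpen hgradf β Y)
  rw [gradExPen_deriv_apply_of_tangent hHf hX hD hHh, finner_sub_right _ _ (X * _),
    finner_mul_Phi_of_Phi_eq_zero hD, sub_zero]

theorem statement_8 {n p : ℕ} (f : Matrix (Fin n) (Fin p) ℝ → ℝ) (β : ℝ)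
    (gradf gradh : Matrix (Fin n) (Fin p) ℝ → Matrix (Fin n) (Fin p) ℝ)
    (Hf : Matrix (Fin n) (Fin p) ℝ → Matrix (Fin n) (Fin p) ℝ →L[ℝ] Matrix (Fin n) (Fin p) ℝ)
    (hgradf : ∀ Y, HasGradAt f Y (gradf Y))
    (hHf : ∀ Y, HasFDerivAt gradf (Hf Y) Y)
    (hHfCont : Continuous Hf)
    (hgradh : ∀ Y, HasGradAt (hpen f β) Y (gradh Y))
    (X : Matrix (Fin n) (Fin p) ℝ) (hX : Xᵀ * X = 1)
    (D : Matrix (Fin n) (Fin p) ℝ) (hD : Phi (Dᵀ * X) = 0)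
    (Hh : Matrix (Fin n) (Fin p) ℝ →L[ℝ] Matrix (Fin n) (Fin p) ℝ)
    (hHh : HasFDerivAt gradh Hh X) :
    finner D (Hh D) = finner D (Hf X D - D * Phi (Xᵀ * gradf X)) :=
  statement_8_general f β gradf gradh Hf hgradf hHf hgradh X hX D hD Hh hHh

end ExPen
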